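/- If d ≥ g + k, the positive L'-tableaux with parameters (g,d,k) having no blue 1 in the bottom row are in bijection with binary sequences of length g; in particular there are 2^g of them. -/

import Mathlib

/-- A cell of an L'-tableau: red with a value, blue with a value, or gray. -/
inductive LpCell : Type where
  | red (v : ℕ) : LpCell
  | blue (v : ℕ) : LpCell
  | gray : LpCell
deriving DecidableEq

/-- A positive L'-tableau with parameters (g,d,k): a filling of the 2×(d−1) grid
with a standard Young tableau of size g in the lower-left corner (red), the k−1
rightmost boxes of the top row gray, and a {0,1} semistandard skew filling of the
remaining boxes (blue). Row 0 is the bottom row. -/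
structure PosLpTableau (g d k : ℕ) where
  entry : Fin 2 → Fin (d-1) → LpCell
  gray_iff : ∀ (i : Fin 2) (j : Fin (d-1)),
    entry i j = LpCell.gray ↔ (i = 1 ∧ (d-1) - (k-1) ≤ (j : ℕ))
  red_left : ∀ (i : Fin 2) (j j' : Fin (d-1)) (v : ℕ),
    entry i j = LpCell.red v → j' ≤ j → ∃ w, entry i j' = LpCell.red w
  red_down : ∀ (i i' : Fin 2) (j : Fin (d-1)) (v : ℕ),
    entry i j = LpCell.red v → i' ≤ i → ∃ w, entry i' j = LpCell.red w
  red_vals : ∀ (i : Fin 2) (j : Fin (d-1)) (v : ℕ), entry i j = LpCell.red v → 1 ≤ v ∧ v ≤ g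
  red_content : ∀ v : ℕ, 1 ≤ v → v ≤ g → ∃! p : Fin 2 × Fin (d-1), entry p.1 p.2 = LpCell.red v
  red_row : ∀ (i : Fin 2) (j j' : Fin (d-1)) (a b : ℕ),
    entry i j = LpCell.red a → entry i j' = LpCell.red b → j < j' → a < b
  red_col : ∀ (i i' : Fin 2) (j : Fin (d-1)) (a b : ℕ),
    entry i j = LpCell.red a → entry i' j = LpCell.red b → i < i' → a < b
  blue_vals : ∀ (i : Fin 2) (j : Fin (d-1)) (v : ℕ), entry i j = LpCell.blue v → v ≤ 1
  blue_row : ∀ (i : Fin 2) (j j' : Fin (d-1)) (a b : ℕ),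
    entry i j = LpCell.blue a → entry i j' = LpCell.blue b → j < j' → a ≤ b
  blue_col : ∀ (i i' : Fin 2) (j : Fin (d-1)) (a b : ℕ),
    entry i j = LpCell.blue a → entry i' j = LpCell.blue b → i < i' → a < b

/-- A negative L'-tableau with parameters (g,d,k): the same data on a 2×(d−2) grid
with k−2 gray boxes at the right of the top row. -/
def NegLpTableau (g d k : ℕ) : Type := PosLpTableau g (d-1) (k-1)

/-!
A tableau with no blue 1 in the bottom row is determined by the set `S` of red entries in its top
row and the number `p` of blue zeros in its top row. Its red part is the two-row standard tableau
whose rows list `S` and its complement in increasing order; column strictness of that tableau is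
the ballot condition on `S`. The bottom row is otherwise blue 0, and the blue part of the top row
reads `0^p 1^…`, where column strictness against the blue zeros below forces
`p ≤ g - 2|S|`. Conversely every such pair `(S, p)` gives a tableau, because `d ≥ g + k` keeps the
red cells clear of the gray ones.

It remains to show `∑_S (g + 1 - 2|S|) = 2^g` over ballot sets `S ⊆ [0, g)`. A ballot set of
`[0, n)` with excess `e = n - 2|S|` extends to `[0, n + 1)` by `n ∉ S`, with weight `e + 2`, and,
when `e > 0`, by `n ∈ S`, with weight `e`; the two add up to twice the old weight `e + 1`.
-/

open Finset
open Nat (count nth)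

namespace Finset

variable {s : Finset ℕ}

lemma nth_mem_of_lt_card {j : ℕ} (hj : j < #s) : nth (· ∈ s) j ∈ s :=
  Nat.nth_mem_of_lt_card s.finite_toSet (by simpa using hj)

lemma count_nth_of_lt_card {j : ℕ} (hj : j < #s) : count (· ∈ s) (nth (· ∈ s) j) = j :=
  Nat.count_nth_of_lt_card_finite s.finite_toSet (by simpa using hj)

lemma nth_lt_nth_of_lt_card {i j : ℕ} (hij : i < j) (hj : j < #s) :
    nth (· ∈ s) i < nth (· ∈ s) j :=
  Nat.nth_lt_nth_of_lt_card (p := (· ∈ s)) s.finite_toSet hij (by simpa using hj)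

lemma count_le_card (n : ℕ) : count (· ∈ s) n ≤ #s := by
  simpa using Nat.count_le_card s.finite_toSet n

lemma count_lt_card {u : ℕ} (hu : u ∈ s) : count (· ∈ s) u < #s := by
  simpa using Nat.count_lt_card s.finite_toSet hu

lemma count_eq_card_of_subset_range {n : ℕ} (h : s ⊆ range n) : count (· ∈ s) n = #s := by
  rw [Nat.count_eq_card_filter_range, filter_mem_eq_inter, inter_eq_right.2 h]

lemma count_sdiff_add_count {g : ℕ} (hs : s ⊆ range g) (n : ℕ) :
    count (· ∈ range g \ s) n + count (· ∈ s) n = min n g := by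
  induction n with
  | zero => simp
  | succ n ih =>
    have hmem : n ∈ range g \ s ↔ n < g ∧ n ∉ s := by simp
    rw [Nat.count_succ, Nat.count_succ, if_congr hmem rfl rfl]
    by_cases hn : n ∈ s
    · have hg : n < g := mem_range.1 (hs hn)
      simp only [hn, hg, not_true, and_false, if_true, if_false]
      omega
    · by_cases hg : n < g <;> simp only [hn, hg, not_false_eq_true, and_true, if_true,
        if_false] <;> omega

lemma count_insert_of_subset_range {n : ℕ} (hs : s ⊆ range n) (m : ℕ) :
    count (· ∈ insert n s) m = count (· ∈ s) m + if n < m then 1 else 0 := by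
  induction m with
  | zero => simp
  | succ m ih =>
    have hmt : m ∈ s → m < n := fun h => mem_range.1 (hs h)
    rw [Nat.count_succ, Nat.count_succ, ih]
    by_cases hm : m ∈ s <;> by_cases hmn : m = n <;> simp [hm, hmn] <;> grind

end Finset

/-- `S` is the set of top-row entries (shifted down by one) of a two-row standard Young tableau:
no initial segment `[0, m)` holds more top-row than bottom-row entries. -/
def IsBallot (S : Finset ℕ) : Prop := ∀ m, 2 * count (· ∈ S) m ≤ m

lemma IsBallot.two_mul_card_le {S : Finset ℕ} {n : ℕ} (hb : IsBallot S) (hS : S ⊆ range n) :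
    2 * #S ≤ n := by
  simpa [count_eq_card_of_subset_range hS] using hb n

lemma isBallot_insert_iff {t : Finset ℕ} {n : ℕ} (ht : t ⊆ range n) :
    IsBallot (insert n t) ↔ IsBallot t ∧ 2 * #t + 1 ≤ n := by
  have hcount := count_insert_of_subset_range ht
  have hcard (m : ℕ) (hm : n ≤ m) : count (· ∈ t) m = #t :=
    count_eq_card_of_subset_range (ht.trans (range_subset_range.2 hm))
  constructor
  · intro hb
    refine ⟨fun m => ?_, ?_⟩
    · have := hb m
      rw [hcount] at this
      omega
    · have := hb (n + 1)
      rw [hcount, hcard _ n.le_succ, if_pos n.lt_add_one] at this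
      omega
  · rintro ⟨hb, hn⟩ m
    rw [hcount]
    split_ifs with hm
    · rw [hcard _ hm.le]; omega
    · simpa using hb m

open scoped Classical in
theorem sum_isBallot_eq_two_pow (n : ℕ) :
    ∑ S ∈ (range n).powerset with IsBallot S, (n + 1 - 2 * #S) = 2 ^ n := by
  rw [sum_filter]
  induction n with
  | zero => simp [IsBallot]
  | succ n ih =>
    rw [range_add_one, sum_powerset_insert notMem_range_self, ← sum_add_distrib, pow_succ,
      ← ih, sum_mul]
    refine sum_congr rfl fun t ht => ?_
    have ht : t ⊆ range n := mem_powerset.1 ht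
    rw [isBallot_insert_iff ht, card_insert_of_notMem fun h => by simpa using ht h]
    by_cases hb : IsBallot t
    · have := hb.two_mul_card_le ht
      simp only [hb, true_and, if_true]
      split_ifs <;> omega
    · simp [hb]

/-- The right-hand side is column strictness of the two-row filling with bottom row `range g \ S`
and top row `S`. -/
theorem isBallot_iff_nth_lt {S : Finset ℕ} {g : ℕ} (hS : S ⊆ range g) :
    IsBallot S ↔
      ∀ j < #S, j < #(range g \ S) ∧ nth (· ∈ range g \ S) j < nth (· ∈ S) j := by
  constructor
  · intro hb j hj
    have htS : nth (· ∈ S) j ∈ S := nth_mem_of_lt_card hj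
    have htg := mem_range.1 (hS htS)
    have hball := hb (nth (· ∈ S) j + 1)
    rw [Nat.count_succ, count_nth_of_lt_card hj, if_pos htS] at hball
    have hsum := count_sdiff_add_count hS (nth (· ∈ S) j)
    rw [count_nth_of_lt_card hj] at hsum
    have hB : j < count (· ∈ range g \ S) (nth (· ∈ S) j) := by omega
    exact ⟨hB.trans_le (count_le_card _), Nat.nth_lt_of_lt_count hB⟩
  · intro hcol m
    by_contra! hm
    set c := count (· ∈ S) m
    have hj : c - 1 < #S := (by omega : c - 1 < c).trans_le (count_le_card m)
    obtain ⟨hjB, hlt⟩ := hcol (c - 1) hj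
    have htm : nth (· ∈ S) (c - 1) < m := Nat.nth_lt_of_lt_count (by omega)
    have hbB := nth_mem_of_lt_card hjB
    have hcb := Nat.count_succ (· ∈ range g \ S) (nth (· ∈ range g \ S) (c - 1))
    rw [count_nth_of_lt_card hjB, if_pos hbB] at hcb
    have hmono := Nat.count_monotone (· ∈ range g \ S)
      (show nth (· ∈ range g \ S) (c - 1) + 1 ≤ m by omega)
    have hsum := count_sdiff_add_count hS m
    omega

open scoped Classical in
noncomputable def ballotData (g : ℕ) : Finset (Σ _ : Finset ℕ, ℕ) :=
  ((range g).powerset.filter IsBallot).sigma fun S => range (g + 1 - 2 * #S)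

lemma card_ballotData (g : ℕ) : #(ballotData g) = 2 ^ g := by
  classical
  rw [ballotData, card_sigma]
  simpa using sum_isBallot_eq_two_pow g

lemma mem_ballotData {g : ℕ} {x : Σ _ : Finset ℕ, ℕ} :
    x ∈ ballotData g ↔ x.1 ⊆ range g ∧ IsBallot x.1 ∧ x.2 ≤ g - 2 * #x.1 := by
  simp only [ballotData, mem_sigma, mem_filter, mem_powerset, mem_range]
  constructor
  · rintro ⟨⟨hS, hb⟩, hp⟩
    exact ⟨hS, hb, by omega⟩
  · rintro ⟨hS, hb, hp⟩
    have := hb.two_mul_card_le hS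
    exact ⟨⟨hS, hb⟩, by omega⟩

lemma Fin.card_filter_le_and_lt (N a b : ℕ) :
    #{j : Fin N | a ≤ (j : ℕ) ∧ (j : ℕ) < b} = min b N - a := by
  rw [← card_map Fin.valEmbedding, ← Nat.card_Ico]
  congr 1
  ext x
  simp only [mem_map, mem_filter, mem_univ, true_and, Fin.valEmbedding_apply, mem_Ico]
  constructor
  · rintro ⟨j, ⟨hj₁, hj₂⟩, rfl⟩
    exact ⟨hj₁, lt_min hj₂ j.isLt⟩
  · rintro ⟨hx₁, hx₂⟩
    exact ⟨⟨x, (lt_min_iff.1 hx₂).2⟩, ⟨hx₁, (lt_min_iff.1 hx₂).1⟩, rfl⟩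

lemma Fin.mem_iff_le_and_lt_add_card {N a : ℕ} {s : Finset (Fin N)}
    (hlow : ∀ j ∈ s, a ≤ (j : ℕ)) (hconn : ∀ j ∈ s, ∀ j' : Fin N, a ≤ (j' : ℕ) → j' ≤ j → j' ∈ s)
    (j : Fin N) : j ∈ s ↔ a ≤ (j : ℕ) ∧ (j : ℕ) < a + #s := by
  constructor
  · intro hj
    have hsub : ({j' : Fin N | a ≤ (j' : ℕ) ∧ (j' : ℕ) < j + 1} : Finset _) ⊆ s :=
      fun j' hj' => hconn j hj j' (mem_filter.1 hj').2.1 (Fin.le_def.2 (by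
        have := (mem_filter.1 hj').2.2; omega))
    have hcard := card_le_card hsub
    rw [Fin.card_filter_le_and_lt] at hcard
    exact ⟨hlow j hj, by omega⟩
  · rintro ⟨haj, hjs⟩
    by_contra hj
    have hsub : s ⊆ ({j' : Fin N | a ≤ (j' : ℕ) ∧ (j' : ℕ) < j} : Finset _) := fun j' hj' =>
      mem_filter.2 ⟨mem_univ _, hlow j' hj', by
        by_contra! hle
        exact hj (hconn j' hj' j haj (Fin.le_def.2 hle))⟩
    have hcard := card_le_card hsub
    rw [Fin.card_filter_le_and_lt] at hcard
    omega

def LpCell.redValue : LpCell → ℕ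
  | .red v => v
  | _ => 0

def ballotRows (g : ℕ) (S : Finset ℕ) : Fin 2 → Finset ℕ := ![range g \ S, S]

/-- The L'-tableau whose top row carries the red entries `u + 1` for `u ∈ S`, then `p` blue zeros,
then blue ones. -/
noncomputable def ballotEntry (g d k : ℕ) (S : Finset ℕ) (p : ℕ) (i : Fin 2) (j : Fin (d - 1)) :
    LpCell :=
  if i = 1 ∧ (d - 1) - (k - 1) ≤ (j : ℕ) then .gray
  else if (j : ℕ) < #(ballotRows g S i) then .red (nth (· ∈ ballotRows g S i) j + 1)
  else if i = 0 ∨ (j : ℕ) < #S + p then .blue 0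
  else .blue 1

section Ballot

variable {g d k : ℕ} {S : Finset ℕ} {p : ℕ}

lemma mem_ballotRows (hS : S ⊆ range g) {i : Fin 2} {u : ℕ} :
    u ∈ ballotRows g S i ↔ u < g ∧ (u ∈ S ↔ i = 1) := by
  obtain rfl | rfl : i = 0 ∨ i = 1 := by omega
  · simp [ballotRows]
  · simpa [ballotRows] using fun h => mem_range.1 (hS h)

lemma card_ballotRows_le (hS : S ⊆ range g) (i : Fin 2) : #(ballotRows g S i) ≤ g :=
  (card_le_card fun _ hu => mem_range.2 ((mem_ballotRows hS).1 hu).1).trans_eq (card_range g)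

lemma card_ballotRows_zero (hS : S ⊆ range g) : #(ballotRows g S 0) = g - #S := by
  simp [ballotRows, card_sdiff_of_subset hS]

lemma ballotEntry_eq_gray_iff {i : Fin 2} {j : Fin (d - 1)} :
    ballotEntry g d k S p i j = .gray ↔ i = 1 ∧ (d - 1) - (k - 1) ≤ (j : ℕ) := by
  unfold ballotEntry
  split_ifs <;> simp_all

lemma ballotEntry_eq_red_iff (hS : S ⊆ range g) (hg : g ≤ (d - 1) - (k - 1)) {i : Fin 2}
    {j : Fin (d - 1)} {v : ℕ} :
    ballotEntry g d k S p i j = .red v ↔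
      (j : ℕ) < #(ballotRows g S i) ∧ v = nth (· ∈ ballotRows g S i) j + 1 := by
  have := card_ballotRows_le hS i
  unfold ballotEntry
  split_ifs with hgray hred <;> simp only [LpCell.red.injEq, false_iff, not_and]
  · omega
  · simp [hred, eq_comm]
  all_goals exact fun h => absurd h hred

lemma ballotEntry_eq_blue_iff {i : Fin 2} {j : Fin (d - 1)} {v : ℕ} :
    ballotEntry g d k S p i j = .blue v ↔
      ¬(i = 1 ∧ (d - 1) - (k - 1) ≤ (j : ℕ)) ∧ #(ballotRows g S i) ≤ (j : ℕ) ∧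
        v = if i = 0 ∨ (j : ℕ) < #S + p then 0 else 1 := by
  unfold ballotEntry
  split_ifs <;> simp_all [eq_comm]

end Ballot

namespace PosLpTableau

variable {g d k : ℕ}

theorem entry_injective : Function.Injective (entry : PosLpTableau g d k → _) := by
  rintro ⟨⟩ ⟨⟩ h
  cases h
  rfl

variable (T : PosLpTableau g d k)

open scoped Classical in
noncomputable def rowSet (i : Fin 2) : Finset ℕ :=
  {u ∈ range g | ∃ j, T.entry i j = .red (u + 1)}

open scoped Classical in
noncomputable def topZeroCols : Finset (Fin (d - 1)) := {j | T.entry 1 j = .blue 0}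

lemma rowSet_subset_range (i : Fin 2) : T.rowSet i ⊆ range g := filter_subset _ _

lemma mem_rowSet_iff {i : Fin 2} {u : ℕ} :
    u ∈ T.rowSet i ↔ u < g ∧ ∃ j, T.entry i j = .red (u + 1) := by
  simp [rowSet]

lemma mem_rowSet_of_entry_eq_red {i : Fin 2} {j : Fin (d - 1)} {u : ℕ}
    (h : T.entry i j = .red (u + 1)) : u ∈ T.rowSet i := by
  have := T.red_vals i j _ h
  exact T.mem_rowSet_iff.2 ⟨by omega, j, h⟩

/-- The red entries of a row increase from left to right, so the column of an entry is the number
of smaller entries in its row. -/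
lemma count_rowSet_of_entry_eq_red {i : Fin 2} {j : Fin (d - 1)} {u : ℕ}
    (h : T.entry i j = .red (u + 1)) : count (· ∈ T.rowSet i) u = j := by
  have hleft : ∀ j' < j, ∃ w, T.entry i j' = .red (w + 1) ∧ w < u := fun j' hj' => by
    obtain ⟨w, hw⟩ := T.red_left i j j' _ h hj'.le
    have hw₁ := (T.red_vals i j' w hw).1
    have hwu := T.red_row i j' j w _ hw h hj'
    exact ⟨w - 1, by rw [Nat.sub_add_cancel hw₁]; exact hw, by omega⟩
  rw [Nat.count_eq_card_filter_range, ← Fin.card_Iio j]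
  symm
  refine card_nbij (fun j' => (T.entry i j').redValue - 1) ?_ ?_ ?_
  · intro j' hj'
    obtain ⟨w, hw, hwu⟩ := hleft j' (mem_Iio.1 hj')
    simp only [coe_filter, Set.mem_ofPred_eq, mem_range, hw, LpCell.redValue, Nat.add_sub_cancel]
    exact ⟨hwu, T.mem_rowSet_of_entry_eq_red hw⟩
  · intro j₁ hj₁ j₂ hj₂ heq
    obtain ⟨w₁, hw₁, -⟩ := hleft j₁ (mem_Iio.1 hj₁)
    obtain ⟨w₂, hw₂, -⟩ := hleft j₂ (mem_Iio.1 hj₂)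
    simp only [hw₁, hw₂, LpCell.redValue, Nat.add_sub_cancel] at heq
    subst heq
    by_contra hne
    rcases lt_or_gt_of_ne hne with hlt | hlt
    · exact lt_irrefl _ (T.red_row i _ _ _ _ hw₁ hw₂ hlt)
    · exact lt_irrefl _ (T.red_row i _ _ _ _ hw₂ hw₁ hlt)
  · intro u' hu'
    simp only [coe_filter, Set.mem_ofPred_eq, mem_range, mem_rowSet_iff] at hu'
    obtain ⟨hu'u, -, j', hj'⟩ := hu'
    refine ⟨j', mem_Iio.2 ?_, by simp [hj', LpCell.redValue]⟩
    by_contra! hle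
    rcases hle.lt_or_eq with hlt | rfl
    · have := T.red_row i _ _ _ _ h hj' hlt
      omega
    · rw [h] at hj'
      injection hj'
      omega

lemma exists_entry_eq_red_nth {i : Fin 2} {j : ℕ} (hj : j < #(T.rowSet i)) :
    ∃ c : Fin (d - 1), (c : ℕ) = j ∧ T.entry i c = .red (nth (· ∈ T.rowSet i) j + 1) := by
  obtain ⟨-, c, hc⟩ := T.mem_rowSet_iff.1 (nth_mem_of_lt_card hj)
  refine ⟨c, ?_, hc⟩
  rw [← T.count_rowSet_of_entry_eq_red hc, count_nth_of_lt_card hj]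

lemma entry_eq_red_iff {i : Fin 2} {j : Fin (d - 1)} {v : ℕ} :
    T.entry i j = .red v ↔ (j : ℕ) < #(T.rowSet i) ∧ v = nth (· ∈ T.rowSet i) j + 1 := by
  constructor
  · intro h
    obtain ⟨u, rfl⟩ : ∃ u, v = u + 1 := ⟨v - 1, by have := (T.red_vals i j v h).1; omega⟩
    have hu := T.mem_rowSet_of_entry_eq_red h
    have hc := T.count_rowSet_of_entry_eq_red h
    exact ⟨hc ▸ count_lt_card hu, by rw [← hc, Nat.nth_count hu]⟩
  · rintro ⟨hj, rfl⟩
    obtain ⟨c, hc, hcv⟩ := T.exists_entry_eq_red_nth hj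
    rwa [Fin.ext hc] at hcv

lemma rowSet_zero : T.rowSet 0 = range g \ T.rowSet 1 := by
  ext u
  simp only [rowSet, mem_sdiff, mem_filter, mem_range]
  constructor
  · rintro ⟨hu, j₀, h₀⟩
    refine ⟨hu, fun ⟨_, j₁, h₁⟩ => ?_⟩
    obtain ⟨_, _, huniq⟩ := T.red_content (u + 1) (by omega) (by omega)
    have := (huniq (0, j₀) h₀).trans (huniq (1, j₁) h₁).symm
    simp at this
  · rintro ⟨hu, hnot⟩
    obtain ⟨⟨i, j⟩, h, -⟩ := T.red_content (u + 1) (by omega) (by omega)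
    refine ⟨hu, j, ?_⟩
    fin_cases i
    · exact h
    · exact absurd ⟨hu, j, h⟩ hnot

lemma ballotRows_rowSet : ballotRows g (T.rowSet 1) = T.rowSet := by
  funext i
  fin_cases i
  · exact T.rowSet_zero.symm
  · rfl

lemma isBallot_rowSet_one : IsBallot (T.rowSet 1) := by
  refine (isBallot_iff_nth_lt (T.rowSet_subset_range 1)).2 fun j hj => ?_
  obtain ⟨c, rfl, hc⟩ := T.exists_entry_eq_red_nth hj
  obtain ⟨w, hw⟩ := T.red_down 1 0 c _ hc (by decide)
  have hcol := T.red_col 0 1 c _ _ hw hc (by decide)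
  rw [entry_eq_red_iff, rowSet_zero] at hw
  exact ⟨hw.1, by omega⟩

lemma exists_entry_eq_blue {i : Fin 2} {j : Fin (d - 1)} (hgray : T.entry i j ≠ .gray)
    (hred : ∀ v, T.entry i j ≠ .red v) : ∃ v ≤ 1, T.entry i j = .blue v := by
  cases h : T.entry i j with
  | red v => exact absurd h (hred v)
  | blue v => exact ⟨v, T.blue_vals i j v h, rfl⟩
  | gray => exact absurd h hgray

lemma entry_one_eq_blue_zero_iff (j : Fin (d - 1)) :
    T.entry 1 j = .blue 0 ↔
      #(T.rowSet 1) ≤ (j : ℕ) ∧ (j : ℕ) < #(T.rowSet 1) + #T.topZeroCols := by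
  have hmem (j : Fin (d - 1)) : j ∈ T.topZeroCols ↔ T.entry 1 j = .blue 0 := by
    simp [topZeroCols]
  rw [← hmem, Fin.mem_iff_le_and_lt_add_card]
  · intro j hj
    by_contra! hlt
    have := T.entry_eq_red_iff.2 ⟨hlt, rfl⟩
    rw [(hmem j).1 hj] at this
    cases this
  · intro j hj j' haj' hle
    rw [hmem] at hj ⊢
    have hgray : T.entry 1 j' ≠ .gray := fun h => by
      have := (T.gray_iff 1 j).2 ⟨rfl, ((T.gray_iff 1 j').1 h).2.trans (Fin.le_def.1 hle)⟩
      rw [hj] at this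
      cases this
    have hred : ∀ v, T.entry 1 j' ≠ .red v := fun v h => by
      have := (T.entry_eq_red_iff.1 h).1
      omega
    obtain ⟨v, -, hv⟩ := T.exists_entry_eq_blue hgray hred
    rcases hle.lt_or_eq with hlt | rfl
    · have := T.blue_row 1 j' j v 0 hv hj hlt
      rw [hv, Nat.le_zero.1 this]
    · exact hj

lemma entry_eq_ballotEntry (hT : ∀ j, T.entry 0 j ≠ .blue 1) :
    T.entry = ballotEntry g d k (T.rowSet 1) #T.topZeroCols := by
  funext i j
  rw [ballotEntry, ballotRows_rowSet]
  split_ifs with hgray hred hzero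
  · exact (T.gray_iff i j).2 hgray
  · exact T.entry_eq_red_iff.2 ⟨hred, rfl⟩
  all_goals
    obtain ⟨v, hv₁, hv⟩ := T.exists_entry_eq_blue (mt (T.gray_iff i j).1 hgray)
      (fun v h => hred (T.entry_eq_red_iff.1 h).1)
    rw [hv]
    obtain rfl | rfl : i = 0 ∨ i = 1 := by omega
  · have : v ≠ 1 := fun h => hT j (h ▸ hv)
    congr
    omega
  · exact hv ▸ (T.entry_one_eq_blue_zero_iff j).2 ⟨by simpa using hred, by simpa using hzero⟩
  · simp at hzero
  · have : v ≠ 0 := fun h =>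
      (T.entry_one_eq_blue_zero_iff j).not.2 (by simp at hzero; omega) (h ▸ hv)
    congr
    omega

lemma card_topZeroCols_le (hT : ∀ j, T.entry 0 j ≠ .blue 1) :
    #T.topZeroCols ≤ g - 2 * #(T.rowSet 1) := by
  have hB : #(T.rowSet 0) = g - #(T.rowSet 1) := by
    rw [rowSet_zero, card_sdiff_of_subset (T.rowSet_subset_range 1), card_range]
  have hsub : T.topZeroCols ⊆
      ({j : Fin (d - 1) | #(T.rowSet 1) ≤ (j : ℕ) ∧ (j : ℕ) < g - #(T.rowSet 1)} : Finset _) := by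
    intro j hj
    have h₀ : T.entry 1 j = .blue 0 := by simpa [topZeroCols] using hj
    refine mem_filter.2 ⟨mem_univ _, ((T.entry_one_eq_blue_zero_iff j).1 h₀).1, ?_⟩
    by_contra! hge
    have hred : ∀ v, T.entry 0 j ≠ .red v := fun v h => by
      have := (T.entry_eq_red_iff.1 h).1
      omega
    obtain ⟨v, hv₁, hv⟩ := T.exists_entry_eq_blue (fun h => by simp [T.gray_iff] at h) hred
    have := T.blue_col 0 1 j v 0 hv h₀ (by decide)
    exact hT j (by rw [hv]; congr; omega)
  have := card_le_card hsub
  rw [Fin.card_filter_le_and_lt] at this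
  omega

variable {S : Finset ℕ} {p : ℕ}

noncomputable def ofBallot (hS : S ⊆ range g) (hb : IsBallot S) (hp : p ≤ g - 2 * #S)
    (hg : g ≤ (d - 1) - (k - 1)) : PosLpTableau g d k where
  entry := ballotEntry g d k S p
  gray_iff _ _ := ballotEntry_eq_gray_iff
  red_left i j j' v h hle := by
    rw [ballotEntry_eq_red_iff hS hg] at h
    exact ⟨_, (ballotEntry_eq_red_iff hS hg).2 ⟨lt_of_le_of_lt hle h.1, rfl⟩⟩
  red_down i i' j v h hle := by
    have hS₂ := hb.two_mul_card_le hS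
    have hB := card_ballotRows_zero hS
    rw [ballotEntry_eq_red_iff hS hg] at h
    refine ⟨_, (ballotEntry_eq_red_iff hS hg).2 ⟨?_, rfl⟩⟩
    obtain rfl | ⟨rfl, rfl⟩ : i' = i ∨ (i' = 0 ∧ i = 1) := by omega
    · exact h.1
    · rw [card_ballotRows_zero hS]
      have : #(ballotRows g S 1) = #S := rfl
      omega
  red_vals i j v h := by
    rw [ballotEntry_eq_red_iff hS hg] at h
    have := ((mem_ballotRows hS).1 (nth_mem_of_lt_card h.1)).1
    omega
  red_content v hv₁ hv₂ := by
    obtain ⟨i, hi⟩ : ∃ i, v - 1 ∈ ballotRows g S i := by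
      by_cases hu : v - 1 ∈ S
      · exact ⟨1, hu⟩
      · exact ⟨0, mem_sdiff.2 ⟨mem_range.2 (by omega), hu⟩⟩
    have hj := count_lt_card hi
    have hjd := (card_ballotRows_le hS i).trans hg
    refine ⟨(i, ⟨count (· ∈ ballotRows g S i) (v - 1), by omega⟩), ?_, ?_⟩
    · exact (ballotEntry_eq_red_iff hS hg).2 ⟨hj, by rw [Nat.nth_count hi]; omega⟩
    · rintro ⟨i', j'⟩ (h : ballotEntry g d k S p i' j' = .red v)
      obtain ⟨hj', rfl⟩ := (ballotEntry_eq_red_iff hS hg).1 h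
      have hi' := nth_mem_of_lt_card hj'
      simp only [Nat.add_sub_cancel] at hi hj ⊢
      have hii' : i' = i := by
        have := ((mem_ballotRows hS).1 hi).2.symm.trans ((mem_ballotRows hS).1 hi').2
        omega
      subst hii'
      ext
      · rfl
      · simp [count_nth_of_lt_card hj']
  red_row i j j' a b ha hb hlt := by
    rw [ballotEntry_eq_red_iff hS hg] at ha hb
    have := nth_lt_nth_of_lt_card hlt hb.1
    omega
  red_col i i' j a b ha hb' hlt := by
    obtain ⟨rfl, rfl⟩ : i = 0 ∧ i' = 1 := by omega
    rw [ballotEntry_eq_red_iff hS hg] at ha hb'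
    have := ((isBallot_iff_nth_lt hS).1 hb j hb'.1).2
    simp only [ballotRows, Matrix.cons_val_zero, Matrix.cons_val_one] at ha hb' this
    omega
  blue_vals i j v h := by
    obtain ⟨-, -, rfl⟩ := ballotEntry_eq_blue_iff.1 h
    split_ifs <;> omega
  blue_row i j j' a b ha hb hlt := by
    obtain ⟨-, -, rfl⟩ := ballotEntry_eq_blue_iff.1 ha
    obtain ⟨-, -, rfl⟩ := ballotEntry_eq_blue_iff.1 hb
    have : (j : ℕ) < j' := hlt
    split_ifs <;> omega
  blue_col i i' j a b ha hb' hlt := by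
    obtain ⟨rfl, rfl⟩ : i = 0 ∧ i' = 1 := by omega
    obtain ⟨-, hj, rfl⟩ := ballotEntry_eq_blue_iff.1 ha
    obtain ⟨-, -, rfl⟩ := ballotEntry_eq_blue_iff.1 hb'
    rw [card_ballotRows_zero hS] at hj
    have := hb.two_mul_card_le hS
    split_ifs <;> omega

lemma ofBallot_entry_zero_ne_blue_one (hS : S ⊆ range g) (hb : IsBallot S)
    (hp : p ≤ g - 2 * #S) (hg : g ≤ (d - 1) - (k - 1)) (j : Fin (d - 1)) :
    (ofBallot hS hb hp hg).entry 0 j ≠ .blue 1 := fun h => by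
  simp [ofBallot, ballotEntry_eq_blue_iff] at h

lemma rowSet_ofBallot (hS : S ⊆ range g) (hb : IsBallot S) (hp : p ≤ g - 2 * #S)
    (hg : g ≤ (d - 1) - (k - 1)) : (ofBallot hS hb hp hg).rowSet 1 = S := by
  ext u
  rw [PosLpTableau.mem_rowSet_iff]
  constructor
  · rintro ⟨-, j, hj⟩
    obtain ⟨hj, hu⟩ := (ballotEntry_eq_red_iff hS hg).1 hj
    rw [Nat.add_right_cancel hu]
    exact nth_mem_of_lt_card hj
  · intro hu
    have hj := count_lt_card hu
    have := (card_le_card hS).trans_eq (card_range g)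
    refine ⟨mem_range.1 (hS hu), ⟨count (· ∈ S) u, by omega⟩,
      (ballotEntry_eq_red_iff hS hg).2 ⟨hj, ?_⟩⟩
    rw [ballotRows, Matrix.cons_val_one, Matrix.cons_val_zero, Nat.nth_count hu]

lemma card_topZeroCols_ofBallot (hS : S ⊆ range g) (hb : IsBallot S) (hp : p ≤ g - 2 * #S)
    (hg : g ≤ (d - 1) - (k - 1)) : #(ofBallot hS hb hp hg).topZeroCols = p := by
  have hS₂ := hb.two_mul_card_le hS
  have hcols : (ofBallot hS hb hp hg).topZeroCols =
      ({j : Fin (d - 1) | #S ≤ (j : ℕ) ∧ (j : ℕ) < #S + p} : Finset _) := by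
    ext j
    simp only [PosLpTableau.topZeroCols, mem_filter, mem_univ, true_and, ofBallot,
      ballotEntry_eq_blue_iff, ballotRows, Matrix.cons_val_one, Matrix.cons_val_zero]
    split_ifs
    · omega
    · simp only [and_false, false_iff, not_and, not_lt]
      omega
  rw [hcols, Fin.card_filter_le_and_lt]
  omega

noncomputable def toBallotData (T : {T : PosLpTableau g d k // ∀ j, T.entry 0 j ≠ .blue 1}) :
    ballotData g :=
  ⟨⟨T.1.rowSet 1, #T.1.topZeroCols⟩,
    mem_ballotData.2 ⟨T.1.rowSet_subset_range 1, T.1.isBallot_rowSet_one,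
      T.1.card_topZeroCols_le T.2⟩⟩

theorem toBallotData_bijective (hg : g ≤ (d - 1) - (k - 1)) :
    Function.Bijective (toBallotData (g := g) (d := d) (k := k)) := by
  constructor
  · rintro ⟨T, hT⟩ ⟨U, hU⟩ h
    simp only [toBallotData, Subtype.mk.injEq, Sigma.mk.injEq, heq_eq_eq] at h
    refine Subtype.ext (entry_injective ?_)
    rw [T.entry_eq_ballotEntry hT, U.entry_eq_ballotEntry hU, h.1, h.2]
  · rintro ⟨⟨S, p⟩, hx⟩
    obtain ⟨hS, hb, hp⟩ := mem_ballotData.1 hx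
    refine ⟨⟨ofBallot hS hb hp hg, ofBallot_entry_zero_ne_blue_one hS hb hp hg⟩, ?_⟩
    simp [toBallotData, rowSet_ofBallot, card_topZeroCols_ofBallot]

end PosLpTableau

/-- If d ≥ g + k, the positive L'-tableaux with parameters (g,d,k) having no blue
1 in the bottom row are in bijection with binary sequences of length g; in
particular there are 2^g of them. -/
theorem stmt_16 (g d k : ℕ) (hk : 2 ≤ k) (h : g + k ≤ d) :
    Nonempty
      ({T : PosLpTableau g d k // ∀ j : Fin (d - 1), T.entry 0 j ≠ LpCell.blue 1} ≃
        (Fin g → Fin 2)) ∧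
      Nat.card {T : PosLpTableau g d k //
        ∀ j : Fin (d - 1), T.entry 0 j ≠ LpCell.blue 1} = 2 ^ g := by
  have e := Equiv.ofBijective _ (PosLpTableau.toBallotData_bijective (d := d) (k := k) (g := g)
    (by omega))
  have hcard : Nat.card {T : PosLpTableau g d k //
      ∀ j : Fin (d - 1), T.entry 0 j ≠ LpCell.blue 1} = 2 ^ g := by
    rw [Nat.card_congr e, Nat.card_eq_finsetCard, card_ballotData]
  have := Finite.of_equiv _ e.symm
  exact ⟨Finite.card_eq.1 (by rw [hcard, Nat.card_fun]; simp), hcard⟩
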